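/- arXiv:2203.08572 — 2 statements merged into one kernel-verified Lean document; each statement's English description precedes it below -/
import Mathlib

section
/- Let I = I(G_{n,r}) be the edge ideal of G_{n,r}. Every monomial x^a ∈ I^{(t)} with deg(x^a) ≥ 2t lies in I^t; equivalently, I^t is generated by the set L(t) of monomials of degree at least 2t whose weight on every minimal vertex cover of G_{n,r} is at least t. -/
/-!
`x^a ∈ I^t` means that `a` dominates a sum of `t` edge vectors, and `x^a ∈ I^{(t)}` means that
every independent set `S` satisfies `a(S) + t ≤ |a|`, the minimal vertex covers being the
complements of the maximal independent sets. We induct on `|a| - 2t`. If `|a| > 2t`, one unit of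
weight is removed at a vertex lying in every independent set where this inequality is tight; it
exists by a weighted Hammer–Hansen–Simeone argument: an inclusion-minimal independent set of
maximum surplus `a(Q) - a(N(Q))` lies in every maximum-weight independent set.
If `|a| = 2t`, only the windows of `r + 1` cyclically consecutive vertices, which are independent
in `G_{n,r}`, are used. The first vertex `u` of the support and the vertex `q` carrying the
`(t+1)`-st unit of weight are adjacent, and every window avoiding both has weight at most `t - 1`,
so `a` is a sum of `t` edges by induction on `t`.
-/

open MvPolynomial

/-- The graph `G_{n,r}`: vertices `x_1,…,x_n` in cyclic order (indexed by `ZMod n`),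
where for `i < j` the vertices `x_i, x_j` are adjacent iff `r+1 ≤ j-i ≤ n-(r+1)`. -/
def Gnr (n r : ℕ) : SimpleGraph (ZMod n) :=
  SimpleGraph.fromRel (fun i j => r + 1 ≤ j.val - i.val ∧ j.val - i.val ≤ n - (r + 1))

/-- A vertex cover (as a finite set of vertices): meets every edge. -/
def IsVertexCover {V : Type*} (G : SimpleGraph V) (C : Finset V) : Prop :=
  ∀ ⦃a b : V⦄, G.Adj a b → a ∈ C ∨ b ∈ C

/-- A minimal vertex cover. -/
def IsMinVertexCover {V : Type*} (G : SimpleGraph V) (C : Finset V) : Prop :=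
  IsVertexCover G C ∧ ∀ D ⊆ C, IsVertexCover G D → D = C

/-- The edge ideal `I(G) = (x_i x_j : {x_i,x_j} ∈ E(G))` of a graph. -/
noncomputable def edgeIdeal (k : Type*) [Field k] {V : Type*} (G : SimpleGraph V) :
    Ideal (MvPolynomial V k) :=
  Ideal.span {p | ∃ i j : V, G.Adj i j ∧ p = X i * X j}

/-- The monomial prime ideal generated by the variables of a vertex set `C`. -/
noncomputable def coverPrime (k : Type*) [Field k] {V : Type*} (C : Finset V) :
    Ideal (MvPolynomial V k) :=
  Ideal.span ((fun i => (X i : MvPolynomial V k)) '' ↑C)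

/-- The `t`-th symbolic power of the edge ideal of `G`: the intersection of the `t`-th
powers of the monomial primes corresponding to the minimal vertex covers of `G`. -/
noncomputable def symbPow (k : Type*) [Field k] {V : Type*} (G : SimpleGraph V) (t : ℕ) :
    Ideal (MvPolynomial V k) :=
  ⨅ (C : Finset V) (_ : IsMinVertexCover G C), (coverPrime k C) ^ t


open Pointwise

section MonomialSpan

variable {k V : Type*} [CommSemiring k]

variable (k) in
noncomputable def monomialSpan (s : Set (V →₀ ℕ)) : Ideal (MvPolynomial V k) :=
  Ideal.span ((fun d => monomial d (1 : k)) '' s)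

lemma monomialSpan_eq_top {s : Set (V →₀ ℕ)} (hs : 0 ∈ s) : monomialSpan k s = ⊤ :=
  Ideal.eq_top_of_isUnit_mem _ (Ideal.subset_span ⟨0, hs, rfl⟩) (by simp)

lemma monomialSpan_mul (A B : Set (V →₀ ℕ)) :
    monomialSpan k A * monomialSpan k B = monomialSpan k (A + B) := by
  rw [monomialSpan, monomialSpan, monomialSpan, Ideal.span_mul_span']
  congr 1
  ext p
  simp only [Set.mem_mul, Set.mem_image, Set.mem_add]
  constructor
  · rintro ⟨_, ⟨x, hx, rfl⟩, _, ⟨y, hy, rfl⟩, rfl⟩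
    exact ⟨x + y, ⟨x, hx, y, hy, rfl⟩, by rw [monomial_mul, one_mul]⟩
  · rintro ⟨_, ⟨x, hx, y, hy, rfl⟩, rfl⟩
    exact ⟨_, ⟨x, hx, rfl⟩, _, ⟨y, hy, rfl⟩, by rw [monomial_mul, one_mul]⟩

lemma monomial_mem_monomialSpan_iff [Nontrivial k] {s : Set (V →₀ ℕ)} {a : V →₀ ℕ} :
    monomial a (1 : k) ∈ monomialSpan k s ↔ ∃ d ∈ s, d ≤ a := by
  classical
  rw [monomialSpan, mem_ideal_span_monomial_image, support_monomial, if_neg one_ne_zero]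
  simp

end MonomialSpan

section EdgeSums

variable {V : Type*}

lemma sum_add_single_one [DecidableEq V] (d : V →₀ ℕ) (p : V) (S : Finset V) :
    ∑ v ∈ S, (d + Finsupp.single p 1 : V →₀ ℕ) v =
      ∑ v ∈ S, d v + if p ∈ S then 1 else 0 := by
  simp [Finset.sum_add_distrib, Finsupp.single_apply]

lemma exists_eq_add_single {a : V →₀ ℕ} {p : V} (hp : 0 < a p) :
    ∃ b, a = b + Finsupp.single p 1 := by
  obtain ⟨b, hb⟩ := exists_add_of_le (Finsupp.single_le_iff (x := 1) (f := a).mpr hp)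
  exact ⟨b, hb.trans (add_comm _ _)⟩

def edgeVectors (G : SimpleGraph V) : Set (V →₀ ℕ) :=
  {d | ∃ u v, G.Adj u v ∧ d = Finsupp.single u 1 + Finsupp.single v 1}

def edgeSums (G : SimpleGraph V) : ℕ → Set (V →₀ ℕ)
  | 0 => {0}
  | t + 1 => edgeSums G t + edgeVectors G

variable {G : SimpleGraph V}

lemma mem_edgeSums_succ {t : ℕ} {d : V →₀ ℕ} :
    d ∈ edgeSums G (t + 1) ↔ ∃ b ∈ edgeSums G t, ∃ u v, G.Adj u v ∧
      d = b + Finsupp.single u 1 + Finsupp.single v 1 := by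
  simp only [edgeSums, edgeVectors, Set.mem_add, Set.mem_ofPred_eq]
  constructor
  · rintro ⟨b, hb, _, ⟨u, v, huv, rfl⟩, rfl⟩
    exact ⟨b, hb, u, v, huv, (add_assoc _ _ _).symm⟩
  · rintro ⟨b, hb, u, v, huv, rfl⟩
    exact ⟨b, hb, _, ⟨u, v, huv, rfl⟩, (add_assoc _ _ _).symm⟩

lemma degree_of_mem_edgeSums {t : ℕ} {d : V →₀ ℕ} (hd : d ∈ edgeSums G t) :
    d.degree = 2 * t := by
  induction t generalizing d with
  | zero => simp [show d = 0 from hd]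
  | succ t ih =>
    obtain ⟨b, hb, u, v, -, rfl⟩ := mem_edgeSums_succ.mp hd
    simp only [map_add, Finsupp.degree_single, ih hb]
    ring

lemma le_sum_of_mem_edgeSums [DecidableEq V] {C : Finset V} (hC : IsVertexCover G C)
    {t : ℕ} {d : V →₀ ℕ} (hd : d ∈ edgeSums G t) : t ≤ ∑ i ∈ C, d i := by
  induction t generalizing d with
  | zero => exact Nat.zero_le _
  | succ t ih =>
    obtain ⟨b, hb, u, v, huv, rfl⟩ := mem_edgeSums_succ.mp hd
    rw [sum_add_single_one, sum_add_single_one]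
    have := ih hb
    rcases hC huv with h | h <;> simp only [h, if_true] <;> omega

end EdgeSums

section MonomialMembership

variable {k V : Type*} [Field k]

lemma edgeIdeal_eq_monomialSpan (G : SimpleGraph V) :
    edgeIdeal k G = monomialSpan k (edgeVectors G) := by
  rw [edgeIdeal, monomialSpan]
  congr 1
  ext p
  simp only [Set.mem_ofPred_eq, Set.mem_image, edgeVectors]
  constructor
  · rintro ⟨u, v, huv, rfl⟩
    exact ⟨_, ⟨u, v, huv, rfl⟩, by simp only [X, monomial_mul, one_mul]⟩
  · rintro ⟨_, ⟨u, v, huv, rfl⟩, rfl⟩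
    exact ⟨u, v, huv, by simp only [X, monomial_mul, one_mul]⟩

lemma edgeIdeal_pow_eq_monomialSpan (G : SimpleGraph V) (t : ℕ) :
    edgeIdeal k G ^ t = monomialSpan k (edgeSums G t) := by
  induction t with
  | zero => rw [pow_zero, Ideal.one_eq_top, monomialSpan_eq_top (show 0 ∈ edgeSums G 0 from rfl)]
  | succ t ih => rw [pow_succ, ih, edgeIdeal_eq_monomialSpan, monomialSpan_mul, edgeSums]

lemma monomial_mem_edgeIdeal_pow_iff (G : SimpleGraph V) (t : ℕ) (a : V →₀ ℕ) :
    monomial a (1 : k) ∈ edgeIdeal k G ^ t ↔ ∃ d ∈ edgeSums G t, d ≤ a := by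
  rw [edgeIdeal_pow_eq_monomialSpan, monomial_mem_monomialSpan_iff]

variable [DecidableEq V]

lemma coverPrime_pow_eq_monomialSpan (C : Finset V) (t : ℕ) :
    coverPrime k C ^ t = monomialSpan k {d | t ≤ ∑ i ∈ C, d i} := by
  induction t with
  | zero => rw [pow_zero, Ideal.one_eq_top, monomialSpan_eq_top (Nat.zero_le _)]
  | succ t ih =>
    have hC : coverPrime k C = monomialSpan k {d | ∃ i ∈ C, d = Finsupp.single i 1} := by
      rw [coverPrime, monomialSpan]
      congr 1
      ext p
      simp [X]
    rw [pow_succ, ih, hC, monomialSpan_mul]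
    congr 1
    ext d
    simp only [Set.mem_add, Set.mem_ofPred_eq]
    constructor
    · rintro ⟨b, hb, _, ⟨i, hi, rfl⟩, rfl⟩
      rw [sum_add_single_one, if_pos hi]
      omega
    · intro hd
      obtain ⟨i, hi, hdi⟩ := Finset.sum_pos_iff.mp (show 0 < ∑ i ∈ C, d i by omega)
      obtain ⟨b, rfl⟩ := exists_eq_add_single hdi
      rw [sum_add_single_one, if_pos hi] at hd
      exact ⟨b, by omega, _, ⟨i, hi, rfl⟩, rfl⟩

lemma monomial_mem_coverPrime_pow_iff (C : Finset V) (t : ℕ) (a : V →₀ ℕ) :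
    monomial a (1 : k) ∈ coverPrime k C ^ t ↔ t ≤ ∑ i ∈ C, a i := by
  rw [coverPrime_pow_eq_monomialSpan, monomial_mem_monomialSpan_iff]
  exact ⟨fun ⟨d, hd, hda⟩ => hd.trans (Finset.sum_le_sum fun i _ => hda i),
    fun h => ⟨a, h, le_rfl⟩⟩

lemma monomial_mem_symbPow_iff (G : SimpleGraph V) (t : ℕ) (a : V →₀ ℕ) :
    monomial a (1 : k) ∈ symbPow k G t ↔
      ∀ C : Finset V, IsMinVertexCover G C → t ≤ ∑ i ∈ C, a i := by
  simp only [symbPow, Ideal.mem_iInf, monomial_mem_coverPrime_pow_iff]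

end MonomialMembership

section Covers

variable {V : Type*} [Fintype V] [DecidableEq V] {G : SimpleGraph V}

lemma isMinVertexCover_compl {T : Finset V}
    (hT : Maximal (fun S : Finset V => G.IsIndepSet ↑S) T) : IsMinVertexCover G Tᶜ := by
  refine ⟨fun u v huv => ?_, fun D hD hDcov => ?_⟩
  · by_contra! h
    simp only [Finset.mem_compl, not_not] at h
    exact hT.prop h.1 h.2 huv.ne huv
  · by_contra hne
    obtain ⟨x, hxT, hxD⟩ := Finset.exists_of_ssubset (hD.ssubset_of_ne hne)
    have hindep : G.IsIndepSet ↑(insert x T) := by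
      intro u hu v hv _ huv
      have hnD : ∀ w ∈ insert x T, w ∉ D := by
        simp only [Finset.mem_insert]
        rintro w (rfl | hw) hwD
        · exact hxD hwD
        · exact Finset.mem_compl.mp (hD hwD) hw
      rcases hDcov huv with h | h
      · exact hnD u hu h
      · exact hnD v hv h
    exact Finset.mem_compl.mp hxT
      (hT.2 hindep (Finset.subset_insert x T) (Finset.mem_insert_self x T))

lemma sum_add_le_of_forall_isMinVertexCover {a : V → ℕ} {t : ℕ}
    (hcov : ∀ C : Finset V, IsMinVertexCover G C → t ≤ ∑ i ∈ C, a i)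
    {S : Finset V} (hS : G.IsIndepSet ↑S) : ∑ i ∈ S, a i + t ≤ ∑ i, a i := by
  obtain ⟨T, hST, hT⟩ :=
    Finite.exists_le_maximal (p := fun S : Finset V => G.IsIndepSet ↑S) hS
  have := hcov _ (isMinVertexCover_compl hT)
  rw [← Finset.sum_compl_add_sum T]
  have := Finset.sum_le_sum_of_subset (f := a) hST
  omega

end Covers

section CriticalIndependentSets

variable {V : Type*} [Fintype V] {G : SimpleGraph V}

variable (G) in
open Classical in
noncomputable def neighborFinsetOf (S : Finset V) : Finset V :=
  Finset.univ.filter fun v => ∃ s ∈ S, G.Adj s v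

lemma mem_neighborFinsetOf {S : Finset V} {v : V} :
    v ∈ neighborFinsetOf G S ↔ ∃ s ∈ S, G.Adj s v := by
  simp [neighborFinsetOf]

lemma disjoint_neighborFinsetOf {S : Finset V} (hS : G.IsIndepSet ↑S) :
    Disjoint S (neighborFinsetOf G S) := by
  refine Finset.disjoint_left.mpr fun v hv hvN => ?_
  obtain ⟨s, hs, hsv⟩ := mem_neighborFinsetOf.mp hvN
  exact hS hs hv hsv.ne hsv

variable (G) in
noncomputable def surplus (w : V → ℕ) (Q : Finset V) : ℤ :=
  (∑ v ∈ Q, w v : ℕ) - (∑ v ∈ neighborFinsetOf G Q, w v : ℕ)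

variable (G) in
def IsCritical (w : V → ℕ) (Q : Finset V) : Prop :=
  G.IsIndepSet ↑Q ∧ ∀ T : Finset V, G.IsIndepSet ↑T → surplus G w T ≤ surplus G w Q

variable [DecidableEq V]

/-- Exchanging `S ∩ N(Q)` for `Q \ S` in a maximum-weight independent set `S` cannot increase
its weight. -/
lemma surplus_le_surplus_inter (w : V → ℕ) {Q S : Finset V} (hQ : G.IsIndepSet ↑Q)
    (hS : G.IsIndepSet ↑S)
    (hSmax : ∀ T : Finset V, G.IsIndepSet ↑T → ∑ v ∈ T, w v ≤ ∑ v ∈ S, w v) :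
    surplus G w Q ≤ surplus G w (Q ∩ S) := by
  simp only [surplus]
  set N := neighborFinsetOf G Q
  have hexch : G.IsIndepSet ↑(Q ∪ S \ N) := by
    intro u hu v hv _ huv
    simp only [Finset.coe_union, Finset.coe_sdiff, Set.mem_union, Set.mem_sdiff,
      Finset.mem_coe] at hu hv
    rcases hu with hu | ⟨hu, huN⟩ <;> rcases hv with hv | ⟨hv, hvN⟩
    · exact hQ hu hv huv.ne huv
    · exact hvN (mem_neighborFinsetOf.mpr ⟨u, hu, huv⟩)
    · exact huN (mem_neighborFinsetOf.mpr ⟨v, hv, huv.symm⟩)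
    · exact hS hu hv huv.ne huv
  have hinter : Q ∩ (S \ N) = Q ∩ S := by
    ext v
    simp only [Finset.mem_inter, Finset.mem_sdiff]
    exact ⟨fun h => ⟨h.1, h.2.1⟩,
      fun h => ⟨h.1, h.2, Finset.disjoint_left.mp (disjoint_neighborFinsetOf hQ) h.1⟩⟩
  have hexch_sum := Finset.sum_union_inter (s₁ := Q) (s₂ := S \ N) (f := w)
  rw [hinter] at hexch_sum
  have hsplit := Finset.sum_inter_add_sum_sdiff S N w
  have hdisj : Disjoint (S ∩ N) (neighborFinsetOf G (Q ∩ S)) := by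
    refine Finset.disjoint_left.mpr fun v hv hvN => ?_
    obtain ⟨s, hs, hsv⟩ := mem_neighborFinsetOf.mp hvN
    exact hS (Finset.mem_inter.mp hs).2 (Finset.mem_inter.mp hv).1 hsv.ne hsv
  have hsub : S ∩ N ∪ neighborFinsetOf G (Q ∩ S) ⊆ N := by
    refine Finset.union_subset Finset.inter_subset_right fun v hv => ?_
    obtain ⟨s, hs, hsv⟩ := mem_neighborFinsetOf.mp hv
    exact mem_neighborFinsetOf.mpr ⟨s, (Finset.mem_inter.mp hs).1, hsv⟩
  have hN := Finset.sum_le_sum_of_subset (f := w) hsub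
  rw [Finset.sum_union hdisj] at hN
  have := hSmax _ hexch
  omega

lemma subset_of_minimal_isCritical (w : V → ℕ) {Q : Finset V} (hQ : Minimal (IsCritical G w) Q)
    {S : Finset V} (hS : G.IsIndepSet ↑S)
    (hSmax : ∀ T : Finset V, G.IsIndepSet ↑T → ∑ v ∈ T, w v ≤ ∑ v ∈ S, w v) :
    Q ⊆ S := by
  have hQS : IsCritical G w (Q ∩ S) :=
    ⟨hQ.prop.1.mono (by simp),
      fun T hT => (hQ.prop.2 T hT).trans (surplus_le_surplus_inter w hQ.prop.1 hS hSmax)⟩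
  exact Finset.inter_subset_right.trans' (hQ.le_of_le hQS Finset.inter_subset_left)

/-- Weighted form of a theorem of Hammer, Hansen and Simeone. -/
theorem exists_pos_mem_of_sum_lt_two_mul (w : V → ℕ) {S₀ : Finset V}
    (hS₀ : G.IsIndepSet ↑S₀)
    (hmax : ∀ T : Finset V, G.IsIndepSet ↑T → ∑ v ∈ T, w v ≤ ∑ v ∈ S₀, w v)
    (hlt : ∑ v, w v < 2 * ∑ v ∈ S₀, w v) :
    ∃ p, 0 < w p ∧ ∀ S : Finset V, G.IsIndepSet ↑S →
      ∑ v ∈ S, w v = ∑ v ∈ S₀, w v → p ∈ S := by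
  obtain ⟨Q₀, hQ₀, hQ₀max⟩ := Set.exists_max_image {Q : Finset V | G.IsIndepSet ↑Q}
    (surplus G w) (Set.toFinite _) ⟨∅, by simp⟩
  obtain ⟨Q, -, hQ⟩ := Finite.exists_le_minimal (p := IsCritical G w) ⟨hQ₀, hQ₀max⟩
  have hS₀pos : 0 < surplus G w S₀ := by
    have := Finset.sum_le_sum_of_subset (f := w)
      (Finset.subset_univ (S₀ ∪ neighborFinsetOf G S₀))
    rw [Finset.sum_union (disjoint_neighborFinsetOf hS₀)] at this
    simp only [surplus]
    omega
  have hQpos : 0 < ∑ v ∈ Q, w v := by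
    have := hS₀pos.trans_le (hQ.prop.2 S₀ hS₀)
    simp only [surplus] at this
    omega
  obtain ⟨p, hpQ, hp⟩ := Finset.sum_pos_iff.mp hQpos
  exact ⟨p, hp, fun S hS hSW =>
    subset_of_minimal_isCritical w hQ hS (fun T hT => hSW ▸ hmax T hT) hpQ⟩

end CriticalIndependentSets

section Reduction

variable {V : Type*} [Fintype V] {G : SimpleGraph V}

variable (G) in
def HasEdgeDecompositions : Prop :=
  ∀ (t : ℕ) (a : V →₀ ℕ), ∑ v, a v = 2 * t →
    (∀ S : Finset V, G.IsIndepSet ↑S → ∑ v ∈ S, a v ≤ t) → a ∈ edgeSums G t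

variable [DecidableEq V]

lemma exists_pos_mem_of_tight (w : V → ℕ) {t : ℕ} (h2t : 2 * t < ∑ v, w v)
    (hind : ∀ S : Finset V, G.IsIndepSet ↑S → ∑ v ∈ S, w v + t ≤ ∑ v, w v) :
    ∃ p, 0 < w p ∧
      ∀ S : Finset V, G.IsIndepSet ↑S → ∑ v ∈ S, w v + t = ∑ v, w v → p ∈ S := by
  obtain ⟨S₀, hS₀, hS₀max⟩ := Set.exists_max_image {S : Finset V | G.IsIndepSet ↑S}
    (fun S => ∑ v ∈ S, w v) (Set.toFinite _) ⟨∅, by simp⟩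
  by_cases htight : ∑ v ∈ S₀, w v + t = ∑ v, w v
  · obtain ⟨p, hp, hpS⟩ := exists_pos_mem_of_sum_lt_two_mul w hS₀ hS₀max (by omega)
    exact ⟨p, hp, fun S hS hSt => hpS S hS (by omega)⟩
  · obtain ⟨p, -, hp⟩ := Finset.sum_pos_iff.mp (show 0 < ∑ v, w v by omega)
    refine ⟨p, hp, fun S hS hSt => absurd ?_ htight⟩
    have := hS₀max S hS
    have := hind S₀ hS₀
    omega

theorem exists_mem_edgeSums_le (hG : HasEdgeDecompositions G) {t : ℕ} {a : V →₀ ℕ}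
    (hdeg : 2 * t ≤ ∑ v, a v)
    (hind : ∀ S : Finset V, G.IsIndepSet ↑S → ∑ v ∈ S, a v + t ≤ ∑ v, a v) :
    ∃ d ∈ edgeSums G t, d ≤ a := by
  obtain ⟨m, hm⟩ := Nat.exists_eq_add_of_le hdeg
  induction m generalizing a with
  | zero =>
    exact ⟨a, hG t a hm fun S hS => by have := hind S hS; omega, le_rfl⟩
  | succ m ih =>
    obtain ⟨p, hp, hpS⟩ := exists_pos_mem_of_tight a (by omega) hind
    obtain ⟨b, rfl⟩ := exists_eq_add_single hp
    have hsum := sum_add_single_one b p Finset.univ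
    rw [if_pos (Finset.mem_univ p)] at hsum
    have hindb : ∀ S : Finset V, G.IsIndepSet ↑S → ∑ v ∈ S, b v + t ≤ ∑ v, b v := by
      intro S hS
      have hS_sum := sum_add_single_one b p S
      have := hind S hS
      by_cases hpS' : p ∈ S
      · rw [if_pos hpS'] at hS_sum
        omega
      · rw [if_neg hpS'] at hS_sum
        have := mt (hpS S hS) hpS'
        omega
    obtain ⟨d, hd, hdb⟩ := ih (by omega) hindb (by omega)
    exact ⟨d, hd, hdb.trans le_self_add⟩

theorem monomial_mem_edgeIdeal_pow {k : Type*} [Field k] (hG : HasEdgeDecompositions G)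
    {t : ℕ} {a : V →₀ ℕ}
    (hcov : ∀ C : Finset V, IsMinVertexCover G C → t ≤ ∑ i ∈ C, a i)
    (hdeg : 2 * t ≤ a.degree) : monomial a (1 : k) ∈ edgeIdeal k G ^ t := by
  rw [Finsupp.degree_eq_sum] at hdeg
  exact (monomial_mem_edgeIdeal_pow_iff G t a).mpr
    (exists_mem_edgeSums_le hG hdeg fun S hS => sum_add_le_of_forall_isMinVertexCover hcov hS)

end Reduction

section Circulant

variable {n : ℕ}

lemma gnr_adj_iff_of_val_lt {r : ℕ} {u v : ZMod n} (h : u.val < v.val) :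
    (Gnr n r).Adj u v ↔ r + 1 ≤ v.val - u.val ∧ v.val - u.val ≤ n - (r + 1) := by
  rw [Gnr, SimpleGraph.fromRel_adj]
  constructor
  · rintro ⟨-, h' | h'⟩
    · exact h'
    · omega
  · exact fun h' => ⟨fun huv => by subst huv; omega, Or.inl h'⟩

variable [NeZero n]

lemma ZMod.val_sub_eq_ite (a b : ZMod n) :
    (a - b).val = if b.val ≤ a.val then a.val - b.val else a.val + n - b.val := by
  split_ifs with h
  · exact ZMod.val_sub h
  · have hb := ZMod.val_lt b
    have hab : a - b = ((a.val + n - b.val : ℕ) : ZMod n) := by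
      rw [Nat.cast_sub (by omega), Nat.cast_add, ZMod.natCast_self, add_zero,
        ZMod.natCast_zmod_val, ZMod.natCast_zmod_val]
    rw [hab, ZMod.val_cast_of_lt (by omega)]

variable (n) in
def window (r : ℕ) (s : ZMod n) : Finset (ZMod n) :=
  Finset.univ.filter fun v => (v - s).val ≤ r

lemma mem_window {r : ℕ} {s v : ZMod n} : v ∈ window n r s ↔ (v - s).val ≤ r := by
  simp [window]

lemma isIndepSet_window {r : ℕ} (hr : 2 * r + 2 ≤ n) (s : ZMod n) :
    (Gnr n r).IsIndepSet ↑(window n r s) := by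
  intro u hu v hv huv hadj
  simp only [Finset.mem_coe, mem_window, ZMod.val_sub_eq_ite] at hu hv
  have := ZMod.val_lt s
  rcases lt_trichotomy u.val v.val with h | h | h
  · rw [gnr_adj_iff_of_val_lt h] at hadj
    split_ifs at hu hv <;> omega
  · exact huv (ZMod.val_injective n h)
  · have := (gnr_adj_iff_of_val_lt h).mp hadj.symm
    split_ifs at hu hv <;> omega

lemma mem_window_or_mem_window {r : ℕ} {s u q v₁ v₂ : ZMod n} (h₁ : u.val < v₁.val)
    (h₂ : v₁.val < q.val) (h₃ : q.val < v₂.val) (hv₁ : v₁ ∈ window n r s)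
    (hv₂ : v₂ ∈ window n r s) : u ∈ window n r s ∨ q ∈ window n r s := by
  simp only [mem_window, ZMod.val_sub_eq_ite] at *
  have := ZMod.val_lt v₂
  split_ifs at * <;> omega

lemma exists_sum_lt_le_and_lt_sum_le (a : ZMod n → ℕ) {t : ℕ} (ht : t < ∑ v, a v) :
    ∃ q : ZMod n, ∑ v ∈ Finset.univ.filter (·.val < q.val), a v ≤ t ∧
      t < ∑ v ∈ Finset.univ.filter (·.val ≤ q.val), a v := by
  let P x := ∑ v ∈ Finset.univ.filter (·.val < x), a v ≤ t
  have hP0 : P 0 := by simp [P]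
  have hPn : ¬ P n := by
    simpa [P, Finset.filter_true_of_mem fun v _ => ZMod.val_lt v] using ht
  set x := Nat.findGreatest P n
  have hx : P x := Nat.findGreatest_spec (Nat.zero_le n) hP0
  have hxn : x < n := lt_of_le_of_ne (Nat.findGreatest_le n) fun h => hPn (h ▸ hx)
  have hqx : ((x : ℕ) : ZMod n).val = x := ZMod.val_cast_of_lt hxn
  refine ⟨x, ?_, ?_⟩ <;> rw [hqx]
  · exact hx
  · simpa [P, Nat.lt_succ_iff] using Nat.findGreatest_is_greatest (Nat.lt_succ_self x) hxn

end Circulant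

section Pairing

variable {n : ℕ} [NeZero n] {r : ℕ}

lemma sum_window_le_of_not_mem {t : ℕ} {a : ZMod n →₀ ℕ} {u q s : ZMod n}
    (hsum : ∑ v, a v = 2 * (t + 1)) (hu : 0 < a u) (hufirst : ∀ v, 0 < a v → u.val ≤ v.val)
    (huq : u.val < q.val) (hlt : ∑ v ∈ Finset.univ.filter (·.val < q.val), a v ≤ t + 1)
    (hle : t + 1 < ∑ v ∈ Finset.univ.filter (·.val ≤ q.val), a v)
    (hus : u ∉ window n r s) (hqs : q ∉ window n r s) : ∑ v ∈ window n r s, a v ≤ t := by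
  have hne : ∀ v, 0 < a v → v ∈ window n r s → u.val < v.val ∧ v.val ≠ q.val := by
    refine fun v hv hvs => ⟨lt_of_le_of_ne (hufirst v hv) fun h => ?_, fun h => ?_⟩
    · exact hus (ZMod.val_injective n h ▸ hvs)
    · exact hqs (ZMod.val_injective n h ▸ hvs)
  by_cases hbeyond : ∃ v₂ ∈ window n r s, 0 < a v₂ ∧ q.val < v₂.val
  · obtain ⟨v₂, hv₂, -, hqv₂⟩ := hbeyond
    have hle' : ∑ v ∈ window n r s, a v ≤
        ∑ v ∈ Finset.univ.filter (¬ ·.val ≤ q.val), a v := by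
      refine Finset.sum_le_sum_of_ne_zero fun v hv hav => ?_
      simp only [Finset.mem_filter, Finset.mem_univ, true_and, not_le]
      obtain ⟨huv, hvq⟩ := hne v (Nat.pos_of_ne_zero hav) hv
      by_contra! hvq'
      exact (mem_window_or_mem_window huv (lt_of_le_of_ne hvq' hvq) hqv₂ hv hv₂).elim hus hqs
    have := Finset.sum_filter_add_sum_filter_not Finset.univ (·.val ≤ q.val) a
    omega
  · push Not at hbeyond
    set M := Finset.univ.filter fun v : ZMod n => u.val < v.val ∧ v.val < q.val
    have hle' : ∑ v ∈ window n r s, a v ≤ ∑ v ∈ M, a v := by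
      refine Finset.sum_le_sum_of_ne_zero fun v hv hav => ?_
      have := hbeyond v hv (Nat.pos_of_ne_zero hav)
      have := hne v (Nat.pos_of_ne_zero hav) hv
      simp only [M, Finset.mem_filter, Finset.mem_univ, true_and]
      omega
    have hM : insert u M ⊆ Finset.univ.filter (·.val < q.val) := by
      intro v hv
      simp only [M, Finset.mem_insert, Finset.mem_filter, Finset.mem_univ, true_and] at hv ⊢
      rcases hv with rfl | hv <;> omega
    have := Finset.sum_le_sum_of_subset (f := a) hM
    rw [Finset.sum_insert (by simp [M])] at this
    omega

lemma val_lt_and_adj_of_threshold {t : ℕ} {a : ZMod n →₀ ℕ} {u q : ZMod n}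
    (hsum : ∑ v, a v = 2 * (t + 1)) (hwin : ∀ s, ∑ v ∈ window n r s, a v ≤ t + 1)
    (hu : 0 < a u) (hufirst : ∀ v, 0 < a v → u.val ≤ v.val)
    (hlt : ∑ v ∈ Finset.univ.filter (·.val < q.val), a v ≤ t + 1)
    (hle : t + 1 < ∑ v ∈ Finset.univ.filter (·.val ≤ q.val), a v) :
    u.val < q.val ∧ (Gnr n r).Adj u q := by
  have hnear : r + 1 ≤ q.val - u.val := by
    by_contra! hnear
    have :
        ∑ v ∈ Finset.univ.filter (·.val ≤ q.val), a v ≤ ∑ v ∈ window n r u, a v := by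
      refine Finset.sum_le_sum_of_ne_zero fun v hv hav => ?_
      simp only [Finset.mem_filter, Finset.mem_univ, true_and] at hv
      have := hufirst v (Nat.pos_of_ne_zero hav)
      rw [mem_window, ZMod.val_sub this]
      omega
    have := hwin u
    omega
  have hfar : q.val - u.val ≤ n - (r + 1) := by
    by_contra! hfar
    have : ∑ v ∈ insert u (Finset.univ.filter (¬ ·.val < q.val)), a v ≤
        ∑ v ∈ window n r q, a v := by
      refine Finset.sum_le_sum_of_subset fun v hv => ?_
      simp only [Finset.mem_insert, Finset.mem_filter, Finset.mem_univ, true_and] at hv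
      rw [mem_window, ZMod.val_sub_eq_ite]
      have := ZMod.val_lt v
      rcases hv with rfl | hv <;> split_ifs <;> omega
    rw [Finset.sum_insert (by simp; omega)] at this
    have := Finset.sum_filter_add_sum_filter_not Finset.univ (·.val < q.val) a
    have := hwin q
    omega
  exact ⟨by omega, (gnr_adj_iff_of_val_lt (by omega)).mpr ⟨hnear, hfar⟩⟩

/-- `u` is the first vertex of the support and `q` the vertex carrying the `(t+2)`-nd unit of
weight. -/
lemma exists_adj_forall_sum_window_le {t : ℕ} (a : ZMod n →₀ ℕ)
    (hsum : ∑ v, a v = 2 * (t + 1))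
    (hwin : ∀ s, ∑ v ∈ window n r s, a v ≤ t + 1) :
    ∃ u q, (Gnr n r).Adj u q ∧ 0 < a u ∧ 0 < a q ∧
      ∀ s, u ∉ window n r s → q ∉ window n r s → ∑ v ∈ window n r s, a v ≤ t := by
  obtain ⟨u, hu, hufirst⟩ : ∃ u, 0 < a u ∧ ∀ v, 0 < a v → u.val ≤ v.val := by
    obtain ⟨u, hu, hmin⟩ := a.support.exists_min_image ZMod.val
      (Finsupp.support_nonempty_iff.mpr fun h => by simp [h] at hsum)
    exact ⟨u, Nat.pos_of_ne_zero (Finsupp.mem_support_iff.mp hu),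
      fun v hv => hmin v (Finsupp.mem_support_iff.mpr hv.ne')⟩
  obtain ⟨q, hlt, hle⟩ := exists_sum_lt_le_and_lt_sum_le a (t := t + 1) (by omega)
  have hq : 0 < a q := by
    by_contra! hq
    have : ∑ v ∈ Finset.univ.filter (·.val ≤ q.val), a v ≤
        ∑ v ∈ Finset.univ.filter (·.val < q.val), a v := by
      refine Finset.sum_le_sum_of_ne_zero fun v hv hav => ?_
      simp only [Finset.mem_filter, Finset.mem_univ, true_and] at hv ⊢
      refine lt_of_le_of_ne hv fun h => hav ?_
      rw [ZMod.val_injective n h]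
      omega
    omega
  obtain ⟨huq, hadj⟩ := val_lt_and_adj_of_threshold hsum hwin hu hufirst hlt hle
  exact ⟨u, q, hadj, hu, hq, fun s => sum_window_le_of_not_mem hsum hu hufirst huq hlt hle⟩

theorem mem_edgeSums_of_sum_window_le :
    ∀ (t : ℕ) (a : ZMod n →₀ ℕ), ∑ v, a v = 2 * t →
      (∀ s, ∑ v ∈ window n r s, a v ≤ t) → a ∈ edgeSums (Gnr n r) t
  | 0, a, hsum, _ => by
    simpa [edgeSums, Finsupp.ext_iff] using Finset.sum_eq_zero_iff.mp hsum
  | t + 1, a, hsum, hwin => by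
    obtain ⟨u, q, huq, hu, hq, hrest⟩ := exists_adj_forall_sum_window_le a hsum hwin
    obtain ⟨b, rfl⟩ := exists_eq_add_single hq
    obtain ⟨c, rfl⟩ := exists_eq_add_single (a := b) (p := u) (by simpa [huq.ne] using hu)
    have hsum_c (S : Finset (ZMod n)) := sum_add_single_one (c + Finsupp.single u 1) q S
    simp only [sum_add_single_one c u] at hsum_c
    refine mem_edgeSums_succ.mpr
      ⟨c, mem_edgeSums_of_sum_window_le t c ?_ fun s => ?_, u, q, huq, rfl⟩
    · have := hsum_c Finset.univ
      simp only [Finset.mem_univ, if_true] at this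
      omega
    · have h := hsum_c (window n r s)
      have := hwin s
      by_cases hus : u ∈ window n r s
      · simp only [hus, if_true] at h
        omega
      by_cases hqs : q ∈ window n r s
      · simp only [hqs, if_true] at h
        omega
      have := hrest s hus hqs
      simp only [hus, hqs, if_false] at h
      omega

lemma hasEdgeDecompositions_gnr (hr : 2 * r + 2 ≤ n) : HasEdgeDecompositions (Gnr n r) :=
  fun t a hsum hind =>
    mem_edgeSums_of_sum_window_le t a hsum fun s => hind _ (isIndepSet_window hr s)

end Pairing

theorem stmt11_general {k : Type*} [Field k] (n r t : ℕ) (hn : 2 ≤ n) (hr : r ≤ n / 2 - 1) :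
    (∀ a : ZMod n →₀ ℕ, monomial a (1 : k) ∈ symbPow k (Gnr n r) t →
      2 * t ≤ a.sum (fun _ e => e) → monomial a (1 : k) ∈ (edgeIdeal k (Gnr n r)) ^ t) ∧
    (edgeIdeal k (Gnr n r)) ^ t = Ideal.span {p : MvPolynomial (ZMod n) k |
      ∃ a : ZMod n →₀ ℕ, p = monomial a (1 : k) ∧ 2 * t ≤ a.sum (fun _ e => e) ∧
        ∀ C : Finset (ZMod n), IsMinVertexCover (Gnr n r) C → t ≤ ∑ i ∈ C, a i} := by
  have : NeZero n := ⟨by omega⟩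
  have hG := hasEdgeDecompositions_gnr (n := n) (r := r) (by omega)
  refine ⟨fun a ha hdeg =>
    monomial_mem_edgeIdeal_pow hG ((monomial_mem_symbPow_iff _ _ _).mp ha) hdeg,
    le_antisymm ?_ ?_⟩
  · rw [edgeIdeal_pow_eq_monomialSpan]
    refine Ideal.span_le.mpr ?_
    rintro _ ⟨d, hd, rfl⟩
    exact Ideal.subset_span ⟨d, rfl, (degree_of_mem_edgeSums hd).ge,
      fun C hC => le_sum_of_mem_edgeSums hC.1 hd⟩
  · refine Ideal.span_le.mpr ?_
    rintro _ ⟨a, rfl, hdeg, hcov⟩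
    exact monomial_mem_edgeIdeal_pow hG hcov hdeg

/-- Every monomial `x^a ∈ I^{(t)}` of degree at least `2t` lies in `I^t`;
equivalently, `I^t` is generated by the set `L(t)` of monomials of degree `≥ 2t` whose
weight on every minimal vertex cover is at least `t`. Here `I = I(G_{n,r})`. -/
theorem stmt11 {k : Type*} [Field k] (n r t : ℕ) (hn : 2 ≤ n) (hr : r ≤ n / 2 - 1)
    (ht : 1 ≤ t) :
    (∀ a : ZMod n →₀ ℕ, monomial a (1 : k) ∈ symbPow k (Gnr n r) t →
      2 * t ≤ a.sum (fun _ e => e) → monomial a (1 : k) ∈ (edgeIdeal k (Gnr n r)) ^ t) ∧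
    (edgeIdeal k (Gnr n r)) ^ t = Ideal.span {p : MvPolynomial (ZMod n) k |
      ∃ a : ZMod n →₀ ℕ, p = monomial a (1 : k) ∧ 2 * t ≤ a.sum (fun _ e => e) ∧
        ∀ C : Finset (ZMod n), IsMinVertexCover (Gnr n r) C → t ≤ ∑ i ∈ C, a i} :=
  stmt11_general n r t hn hr
end

section
/- For the edge ideal I = I(G_{n,r}), the least generating degree of the t-th symbolic power satisfies α(I^{(t)}) ≥ ⌈ n t / (n - (r+1)) ⌉ for every t ≥ 1. -/
open MvPolynomial

/-! Every arc of `n - (r + 1)` cyclically consecutive vertices of `G_{n,r}` is a vertex cover,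
since two vertices outside it are at cyclic distance at most `r`. As every vertex cover contains
a minimal one, each monomial `x^d` of an element of `I^{(t)}` has weight at least `t` on each of
the `n` rotations of such an arc; summing over the rotations counts every exponent
`n - (r + 1)` times, so `n t ≤ (n - (r + 1)) deg x^d`. -/

open Finset

section SymbolicPower

variable {k : Type*} [Field k] {V : Type*}

lemma coverPrime_pow_le_span_monomial (C : Finset V) (t : ℕ) :
    coverPrime k C ^ t ≤ Ideal.span ((monomial · (1 : k)) '' {d | t ≤ ∑ i ∈ C, d i}) := by
  induction t with
  | zero =>
    rw [pow_zero, Ideal.one_eq_top, top_le_iff, Ideal.eq_top_iff_one]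
    exact Ideal.subset_span ⟨0, by simp, rfl⟩
  | succ t ih =>
    rw [pow_succ]
    refine (Ideal.mul_mono_left ih).trans ?_
    rw [coverPrime, Ideal.span_mul_span', Ideal.span_le]
    rintro _ ⟨_, ⟨d, hd, rfl⟩, _, ⟨i, hi, rfl⟩, rfl⟩
    refine Ideal.subset_span ⟨d + Finsupp.single i 1, ?_, by simp [X, monomial_mul]⟩
    have hXi : ∑ j ∈ C, Finsupp.single i 1 j = 1 := by
      rw [sum_eq_single_of_mem i hi fun j _ hji => Finsupp.single_eq_of_ne hji,
        Finsupp.single_eq_same]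
    simp only [Set.mem_ofPred_eq, Finsupp.add_apply, sum_add_distrib, hXi] at hd ⊢
    omega

lemma le_sum_of_mem_coverPrime_pow {C : Finset V} {t : ℕ} {p : MvPolynomial V k}
    (hp : p ∈ coverPrime k C ^ t) {d : V →₀ ℕ} (hd : d ∈ p.support) :
    t ≤ ∑ i ∈ C, d i := by
  obtain ⟨e, he, hed⟩ :=
    mem_ideal_span_monomial_image.mp (coverPrime_pow_le_span_monomial C t hp) d hd
  exact he.trans (sum_le_sum fun i _ => hed i)

lemma IsVertexCover.exists_isMinVertexCover_subset {G : SimpleGraph V} {C : Finset V}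
    (hC : IsVertexCover G C) : ∃ D ⊆ C, IsMinVertexCover G D := by
  obtain ⟨D, hDC, hD⟩ := exists_minimal_le_of_wellFoundedLT (IsVertexCover G) C hC
  exact ⟨D, hDC, hD.prop, fun E hED hE => le_antisymm hED (hD.le_of_le hE hED)⟩

lemma le_sum_of_mem_symbPow {G : SimpleGraph V} {t : ℕ} {p : MvPolynomial V k}
    (hp : p ∈ symbPow k G t) {C : Finset V} (hC : IsVertexCover G C) {d : V →₀ ℕ}
    (hd : d ∈ p.support) : t ≤ ∑ i ∈ C, d i := by
  obtain ⟨D, hDC, hD⟩ := hC.exists_isMinVertexCover_subset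
  have hpD : p ∈ coverPrime k D ^ t := by
    rw [symbPow] at hp
    exact Submodule.mem_iInf _ |>.mp (Submodule.mem_iInf _ |>.mp hp D) hD
  exact (le_sum_of_mem_coverPrime_pow hpD hd).trans (sum_le_sum_of_subset hDC)

end SymbolicPower

section Circulant

lemma sum_univ_sum_map_addRight {G M : Type*} [AddGroup G] [Fintype G] [AddCommMonoid M]
    (A : Finset G) (f : G → M) :
    ∑ s, ∑ v ∈ A.map (Equiv.addRight s).toEmbedding, f v = #A • ∑ v, f v := by
  simp only [sum_map, Equiv.coe_toEmbedding, Equiv.coe_addRight]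
  rw [sum_comm, ← sum_const]
  exact sum_congr rfl fun a _ => Equiv.sum_comp (Equiv.addLeft a) f

variable {n : ℕ} [NeZero n]

lemma ZMod.val_add_eq_or_val_add_add_eq (a b : ZMod n) :
    (a + b).val = a.val + b.val ∨ (a + b).val + n = a.val + b.val := by
  rcases lt_or_ge (a.val + b.val) n with h | h
  · exact .inl (ZMod.val_add_of_lt h)
  · exact .inr (ZMod.val_add_val_of_le h).symm

lemma ZMod.card_filter_val_lt {m : ℕ} (hm : m ≤ n) : #{v : ZMod n | v.val < m} = m := by
  obtain ⟨n, rfl⟩ := Nat.exists_eq_succ_of_ne_zero (NeZero.ne n)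
  -- `ZMod (n + 1)` is `Fin (n + 1)` by definition
  exact Fin.card_filter_val_lt.trans (min_eq_right hm)

def cyclicArc (m : ℕ) (s : ZMod n) : Finset (ZMod n) :=
  ({v | v.val < m} : Finset (ZMod n)).map (Equiv.addRight s).toEmbedding

lemma isVertexCover_gnr_cyclicArc (r : ℕ) (s : ZMod n) :
    IsVertexCover (Gnr n r) (cyclicArc (n - (r + 1)) s) := by
  intro a b hab
  simp only [cyclicArc, mem_map_equiv, Equiv.addRight_symm, Equiv.coe_addRight, mem_filter,
    mem_univ, true_and, ← sub_eq_add_neg]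
  by_contra! hout
  obtain ⟨-, hrel⟩ := (SimpleGraph.fromRel_adj _ a b).mp hab
  have ha := ZMod.val_add_eq_or_val_add_add_eq (a - s) s
  have hb := ZMod.val_add_eq_or_val_add_add_eq (b - s) s
  rw [sub_add_cancel] at ha hb
  have := (a - s).val_lt
  have := (b - s).val_lt
  have := s.val_lt
  omega

variable {k : Type*} [Field k]

lemma mul_le_mul_totalDegree_of_mem_symbPow_gnr {r t : ℕ} {p : MvPolynomial (ZMod n) k}
    (hp : p ∈ symbPow k (Gnr n r) t) (hp0 : p ≠ 0) :
    n * t ≤ (n - (r + 1)) * p.totalDegree := by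
  obtain ⟨d, hd⟩ := support_nonempty.mpr hp0
  calc n * t = ∑ _s : ZMod n, t := by simp
    _ ≤ ∑ s, ∑ v ∈ cyclicArc (n - (r + 1)) s, d v :=
      sum_le_sum fun s _ => le_sum_of_mem_symbPow hp (isVertexCover_gnr_cyclicArc r s) hd
    _ = (n - (r + 1)) * ∑ v, d v := by
      unfold cyclicArc
      rw [sum_univ_sum_map_addRight, ZMod.card_filter_val_lt (Nat.sub_le n _), smul_eq_mul]
    _ ≤ (n - (r + 1)) * p.totalDegree := by
      gcongr
      exact (Finsupp.sum_fintype d _ fun _ => rfl).symm.trans_le (le_totalDegree hd)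

end Circulant

theorem stmt12_general {k : Type*} [Field k] (n r t : ℕ) (hn : 2 ≤ n) (hr : r ≤ n / 2 - 1)
    (p : MvPolynomial (ZMod n) k) (hp : p ∈ symbPow k (Gnr n r) t)
    (hp0 : p ≠ 0) :
    ⌈((n : ℚ) * t) / ((n : ℚ) - (r + 1))⌉₊ ≤ p.totalDegree := by
  have : NeZero n := ⟨by omega⟩
  have hdeg := mul_le_mul_totalDegree_of_mem_symbPow_gnr hp hp0
  have hcast : (n : ℚ) - (r + 1) = ((n - (r + 1) : ℕ) : ℚ) := by
    rw [Nat.cast_sub (by omega), Nat.cast_succ]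
  rw [hcast, Nat.ceil_le, div_le_iff₀ (Nat.cast_pos.mpr (by omega))]
  exact_mod_cast (by linarith : n * t ≤ p.totalDegree * (n - (r + 1)))

/-- For `I = I(G_{n,r})`, the least generating degree of the `t`-th symbolic
power satisfies `α(I^{(t)}) ≥ ⌈nt/(n-(r+1))⌉`: every nonzero element of `I^{(t)}` has
total degree at least `⌈nt/(n-(r+1))⌉`. -/
theorem stmt12 {k : Type*} [Field k] (n r t : ℕ) (hn : 2 ≤ n) (hr : r ≤ n / 2 - 1)
    (ht : 1 ≤ t) (p : MvPolynomial (ZMod n) k) (hp : p ∈ symbPow k (Gnr n r) t)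
    (hp0 : p ≠ 0) :
    ⌈((n : ℚ) * t) / ((n : ℚ) - (r + 1))⌉₊ ≤ p.totalDegree :=
  stmt12_general n r t hn hr p hp hp0
end
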